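/- On k-homogeneous Cl^s-valued polynomials, the commutator identity [∂^+, x^{2j+1}(x•)] = x^{2j}(x∧)A holds, where A = E + ∂^+⌋; similarly [∂^-, x^{2j+1}(x∧)] = x^{2j}(x•)B with B = E + ∂^-⌋. -/

import Mathlib

noncomputable section
open scoped TensorProduct
open CliffordAlgebra MvPolynomial

/-- The quadratic form of signature (0,m): Q(x) = -|x|². -/
def Qf (m : ℕ) : QuadraticForm ℝ (Fin m → ℝ) :=
  - QuadraticMap.weightedSumSquares ℝ (fun _ : Fin m => (1 : ℝ))

/-- The real Clifford algebra Cl(0,m). -/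
abbrev Cl (m : ℕ) := CliffordAlgebra (Qf m)

/-- The generators e₁,…,e_m. -/
def e (m : ℕ) (i : Fin m) : Cl m := CliffordAlgebra.ι (Qf m) (Pi.single i 1)

/-- Left outer (wedge) multiplication by `c`:  v ↦ (1/2)(c v + α(v) c). -/
def wedgeL (m : ℕ) (c : Cl m) : Cl m →ₗ[ℝ] Cl m :=
  (1/2 : ℝ) • (LinearMap.mulLeft ℝ c +
    (LinearMap.mulRight ℝ c) ∘ₗ (involute (Q := Qf m)).toLinearMap)

/-- Left inner (dot) multiplication by `c`:  v ↦ (1/2)(c v - α(v) c). -/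
def dotL (m : ℕ) (c : Cl m) : Cl m →ₗ[ℝ] Cl m :=
  (1/2 : ℝ) • (LinearMap.mulLeft ℝ c -
    (LinearMap.mulRight ℝ c) ∘ₗ (involute (Q := Qf m)).toLinearMap)

/-- Scalar polynomials on ℝ^m. -/
abbrev Pm (m : ℕ) := MvPolynomial (Fin m) ℝ

/-- The space P* of Cl(0,m)-valued polynomials on ℝ^m. -/
abbrev MS (m : ℕ) := Pm m ⊗[ℝ] Cl m

/-- Build an operator on Cl-valued polynomials from operators on each factor. -/
def op (m : ℕ) (f : Pm m →ₗ[ℝ] Pm m) (g : Cl m →ₗ[ℝ] Cl m) : Module.End ℝ (MS m) :=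
  TensorProduct.map f g

/-- The operator (x∧) of outer multiplication by the vector variable. -/
def xWedge (m : ℕ) : Module.End ℝ (MS m) :=
  ∑ j : Fin m, op m (LinearMap.mulLeft ℝ (X j)) (wedgeL m (e m j))

/-- The operator (x•) of inner multiplication by the vector variable. -/
def xDot (m : ℕ) : Module.End ℝ (MS m) :=
  ∑ j : Fin m, op m (LinearMap.mulLeft ℝ (X j)) (dotL m (e m j))

/-- Left Clifford multiplication by the vector variable x. -/
def Xmul (m : ℕ) : Module.End ℝ (MS m) :=
  ∑ j : Fin m, op m (LinearMap.mulLeft ℝ (X j)) (LinearMap.mulLeft ℝ (e m j))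

/-- The Dirac operator ∂ = Σ e_j ∂_{x_j}. -/
def Dirac (m : ℕ) : Module.End ℝ (MS m) :=
  ∑ j : Fin m, op m (pderiv j).toLinearMap (LinearMap.mulLeft ℝ (e m j))

/-- The exterior part ∂⁺ of the Dirac operator. -/
def dplus (m : ℕ) : Module.End ℝ (MS m) :=
  ∑ j : Fin m, op m (pderiv j).toLinearMap (wedgeL m (e m j))

/-- The interior part ∂⁻ of the Dirac operator. -/
def dminus (m : ℕ) : Module.End ℝ (MS m) :=
  ∑ j : Fin m, op m (pderiv j).toLinearMap (dotL m (e m j))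

/-- The Euler operator E = Σ x_j ∂_{x_j}. -/
def Euler (m : ℕ) : Module.End ℝ (MS m) :=
  ∑ j : Fin m, op m (LinearMap.mulLeft ℝ (X j) ∘ₗ (pderiv j).toLinearMap) LinearMap.id

/-- The fermionic Euler operator ∂⁺⌋ = -Σ (e_j∧)(e_j•). -/
def fermPlus (m : ℕ) : Module.End ℝ (MS m) :=
  - ∑ j : Fin m, op m LinearMap.id (wedgeL m (e m j) ∘ₗ dotL m (e m j))

/-- The fermionic Euler operator ∂⁻⌋ = -Σ (e_j•)(e_j∧). -/
def fermMinus (m : ℕ) : Module.End ℝ (MS m) :=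
  - ∑ j : Fin m, op m LinearMap.id (dotL m (e m j) ∘ₗ wedgeL m (e m j))

/-- The Laplacian Δ = Σ ∂_{x_j}². -/
def Lap (m : ℕ) : Module.End ℝ (MS m) :=
  ∑ j : Fin m, op m ((pderiv j).toLinearMap ∘ₗ (pderiv j).toLinearMap) LinearMap.id

/-- Multiplication by the Clifford square x² = -(x₁²+⋯+x_m²) of the vector variable. -/
def Mx2 (m : ℕ) : Module.End ℝ (MS m) :=
  op m (LinearMap.mulLeft ℝ (-(∑ j : Fin m, (X j : Pm m) ^ 2))) LinearMap.id

/-- The space Cl^s of s-vectors: the span of products of s distinct generators. -/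
def clGrade (m s : ℕ) : Submodule ℝ (Cl m) :=
  Submodule.span ℝ
    {x | ∃ l : List (Fin m), l.length = s ∧ l.Nodup ∧ x = (l.map (e m)).prod}

/-- The space P_k^s of k-homogeneous s-vector valued polynomials. -/
def Pks (m k s : ℕ) : Submodule ℝ (MS m) :=
  LinearMap.range (TensorProduct.map
    (MvPolynomial.homogeneousSubmodule (Fin m) ℝ k).subtype (clGrade m s).subtype)

/-- The space of s-vector valued polynomials (no homogeneity). -/
def PsVal (m s : ℕ) : Submodule ℝ (MS m) :=
  LinearMap.range (TensorProduct.map (LinearMap.id : Pm m →ₗ[ℝ] Pm m) (clGrade m s).subtype)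

/-- Homogeneous solutions of the Hodge–de Rham system: ∂⁺P = 0 and ∂⁻P = 0. -/
def Hks (m k s : ℕ) : Submodule ℝ (MS m) :=
  Pks m k s ⊓ LinearMap.ker (dplus m) ⊓ LinearMap.ker (dminus m)

/-- Homogeneous s-vector valued monogenic polynomials: ∂P = 0. -/
def HksD (m k s : ℕ) : Submodule ℝ (MS m) :=
  Pks m k s ⊓ LinearMap.ker (Dirac m)

/-- Ker_k^s ∂⁺. -/
def KerP (m k s : ℕ) : Submodule ℝ (MS m) :=
  Pks m k s ⊓ LinearMap.ker (dplus m)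

/-- Ker_k^s ∂⁻. -/
def KerM (m k s : ℕ) : Submodule ℝ (MS m) :=
  Pks m k s ⊓ LinearMap.ker (dminus m)

end

/-!
Since `(x•)² = 0`, the operator `x^{2j+1}(x•)` equals `x^{2j}(x∧)(x•)`. Its commutator with `∂⁺`
splits as `[∂⁺, x^{2j}](x∧)(x•) + x^{2j}[∂⁺, (x∧)(x•)]`. The first term vanishes because
`[∂⁺, x²] = -2(x∧)` commutes with `x²` and `(x∧)² = 0`; the second is `x^{2j}(x∧)(E + ∂⁺⌋)` by the
anticommutators `{∂⁺, x∧} = 0` and `{∂⁺, x•} = -(E + ∂⁺⌋)`. These come from the Weyl relations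
`[∂ᵢ, xⱼ] = δᵢⱼ` and the Clifford relations `{eᵢ∧, eⱼ∧} = {eᵢ•, eⱼ•} = 0`, `{eᵢ∧, eⱼ•} = -δᵢⱼ`.
The second identity is the same computation with `∧` and `•` exchanged.
-/

open scoped TensorProduct
open CliffordAlgebra MvPolynomial

theorem eq_zero_of_add_self_eq_zero {V : Type*} [AddCommGroup V] [Module ℝ V] {x : V}
    (h : x + x = 0) : x = 0 := by
  rw [← two_smul ℝ] at h
  exact (smul_eq_zero.mp h).resolve_left two_ne_zero

theorem lie_pow_mul_eq_zero {R : Type*} [Ring R] {d M W : R} (hMW : Commute M W)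
    (h : ⁅d, M⁆ * W = 0) (j : ℕ) : ⁅d, M ^ j⁆ * W = 0 := by
  induction j with
  | zero => simp [Ring.lie_def]
  | succ j ih =>
    have hsplit : ⁅d, M ^ (j + 1)⁆ * W = ⁅d, M ^ j⁆ * W * M + M ^ j * (⁅d, M⁆ * W) := by
      simp only [Ring.lie_def, pow_succ]
      rw [mul_assoc _ W M, ← hMW.eq]
      noncomm_ring
    rw [hsplit, ih, h]
    simp

theorem lie_mul_add_mul_eq {R : Type*} [Ring R] {d N W D A : R} (hDD : D * D = 0)
    (hdW : d * W + W * d = 0) (hdD : d * D + D * d = -A) (hN : ⁅d, N⁆ * W = 0) :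
    ⁅d, N * (W + D) * D⁆ = N * W * A := by
  calc ⁅d, N * (W + D) * D⁆
      = ⁅d, N⁆ * W * D + N * ((d * W + W * d) * D - W * (d * D + D * d))
          + (d * N * (D * D) - N * (D * D) * d) := by
        simp only [Ring.lie_def]; noncomm_ring
    _ = N * W * A := by rw [hN, hdW, hdD, hDD]; noncomm_ring

namespace TensorProduct

variable {R M N : Type*} [CommRing R] [AddCommGroup M] [Module R M] [AddCommGroup N] [Module R N]

theorem map_sub_left (f f' : Module.End R M) (u : Module.End R N) :
    map (f - f') u = map f u - map f' u := by
  rw [eq_sub_iff_add_eq, ← map_add_left, sub_add_cancel]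

theorem map_mul_map_add_map_mul_map (f f' : Module.End R M) (u v : Module.End R N) :
    map f u * map f' v + map f' v * map f u =
      map (f' * f) (u * v + v * u) + map (f * f' - f' * f) (u * v) := by
  rw [map_add_right, map_sub_left]
  simp only [Module.End.mul_eq_comp, ← map_comp]
  abel

theorem map_mul_map_id_sub_map_id_mul_map (f g : Module.End R M) (u : Module.End R N) :
    map f u * map g LinearMap.id - map g LinearMap.id * map f u = map (f * g - g * f) u := by
  rw [map_sub_left]
  simp only [Module.End.mul_eq_comp, ← map_comp, LinearMap.comp_id, LinearMap.id_comp]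

end TensorProduct

theorem LinearMap.commute_mulLeft_mulLeft {R A : Type*} [CommSemiring R] [CommSemiring A]
    [Algebra R A] (a b : A) : Commute (mulLeft R a) (mulLeft R b) := by
  ext c
  exact mul_left_comm a b c

theorem Derivation.toLinearMap_mul_mulLeft_sub {R A : Type*} [CommRing R] [CommRing A]
    [Algebra R A] (D : Derivation R A A) (q : A) :
    D.toLinearMap * LinearMap.mulLeft R q - LinearMap.mulLeft R q * D.toLinearMap =
      LinearMap.mulLeft R (D q) := by
  ext p
  simp [D.leibniz, mul_comm]

section

variable {m : ℕ}

theorem pderiv_neg_sum_X_sq (i : Fin m) :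
    pderiv i (-∑ j, (X j : Pm m) ^ 2) = (-2 : ℝ) • X i := by
  simp [pderiv_X, Pi.single_apply, two_smul]

theorem polar_Qf_single (i j : Fin m) :
    QuadraticMap.polar (Qf m) (Pi.single i 1) (Pi.single j 1) = if i = j then -2 else 0 := by
  simp [QuadraticMap.polar, Qf, QuadraticMap.weightedSumSquares_apply, Pi.single_apply,
    mul_add, Finset.sum_add_distrib, eq_comm]
  split_ifs <;> ring

theorem wedgeL_ι_mul_wedgeL_ι_add_swap (a b : Fin m → ℝ) :
    wedgeL m (ι _ a) * wedgeL m (ι _ b) + wedgeL m (ι _ b) * wedgeL m (ι _ a) = 0 := by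
  ext v
  have h : (1 / 4 : ℝ) • ((ι (Qf m) a * ι (Qf m) b + ι (Qf m) b * ι (Qf m) a) * v -
      v * (ι (Qf m) b * ι (Qf m) a + ι (Qf m) a * ι (Qf m) b)) = 0 := by
    rw [ι_mul_ι_add_swap, ι_mul_ι_add_swap, Algebra.commutes, QuadraticMap.polar_comm, sub_self,
      smul_zero]
  simp only [wedgeL, LinearMap.add_apply, Module.End.mul_apply, LinearMap.smul_apply,
    LinearMap.mulLeft_apply, LinearMap.comp_apply, LinearMap.mulRight_apply,
    AlgHom.toLinearMap_apply, map_smul, map_add, map_mul, involute_involute, involute_ι,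
    LinearMap.zero_apply]
  rw [← h]
  simp only [mul_add, add_mul, mul_neg, neg_mul, mul_assoc]
  module

theorem dotL_ι_mul_dotL_ι_add_swap (a b : Fin m → ℝ) :
    dotL m (ι _ a) * dotL m (ι _ b) + dotL m (ι _ b) * dotL m (ι _ a) = 0 := by
  ext v
  have h : (1 / 4 : ℝ) • ((ι (Qf m) a * ι (Qf m) b + ι (Qf m) b * ι (Qf m) a) * v -
      v * (ι (Qf m) b * ι (Qf m) a + ι (Qf m) a * ι (Qf m) b)) = 0 := by
    rw [ι_mul_ι_add_swap, ι_mul_ι_add_swap, Algebra.commutes, QuadraticMap.polar_comm, sub_self,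
      smul_zero]
  simp only [dotL, LinearMap.sub_apply, Module.End.mul_apply, LinearMap.smul_apply,
    LinearMap.mulLeft_apply, LinearMap.comp_apply, LinearMap.mulRight_apply,
    AlgHom.toLinearMap_apply, map_smul, map_sub, map_mul, involute_involute, involute_ι,
    LinearMap.zero_apply, LinearMap.add_apply]
  rw [← h]
  simp only [mul_add, add_mul, mul_neg, neg_mul, mul_assoc]
  module

theorem wedgeL_ι_mul_dotL_ι_add_swap (a b : Fin m → ℝ) :
    wedgeL m (ι _ a) * dotL m (ι _ b) + dotL m (ι _ b) * wedgeL m (ι _ a) =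
      (QuadraticMap.polar (Qf m) a b / 2) • 1 := by
  ext v
  have h : (1 / 4 : ℝ) • ((ι (Qf m) a * ι (Qf m) b + ι (Qf m) b * ι (Qf m) a) * v +
      v * (ι (Qf m) a * ι (Qf m) b + ι (Qf m) b * ι (Qf m) a)) =
      (QuadraticMap.polar (Qf m) a b / 2) • v := by
    rw [ι_mul_ι_add_swap, ← Algebra.commutes, ← Algebra.smul_def]
    module
  simp only [wedgeL, dotL, LinearMap.sub_apply, Module.End.mul_apply, LinearMap.smul_apply,
    LinearMap.mulLeft_apply, LinearMap.comp_apply, LinearMap.mulRight_apply,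
    AlgHom.toLinearMap_apply, map_smul, map_sub, map_mul, involute_involute, involute_ι,
    LinearMap.add_apply, map_add, Module.End.one_apply]
  rw [← h]
  simp only [mul_add, add_mul, mul_neg, neg_mul, mul_assoc]
  module

theorem wedgeL_add_dotL (c : Cl m) : wedgeL m c + dotL m c = LinearMap.mulLeft ℝ c := by
  rw [wedgeL, dotL, ← smul_add, add_add_sub_cancel, ← two_smul ℝ, smul_smul]
  norm_num

theorem wedgeL_e_mul_wedgeL_e_add_swap (i j : Fin m) :
    wedgeL m (e m i) * wedgeL m (e m j) + wedgeL m (e m j) * wedgeL m (e m i) = 0 :=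
  wedgeL_ι_mul_wedgeL_ι_add_swap _ _

theorem dotL_e_mul_dotL_e_add_swap (i j : Fin m) :
    dotL m (e m i) * dotL m (e m j) + dotL m (e m j) * dotL m (e m i) = 0 :=
  dotL_ι_mul_dotL_ι_add_swap _ _

theorem wedgeL_e_mul_dotL_e_add_swap (i j : Fin m) :
    wedgeL m (e m i) * dotL m (e m j) + dotL m (e m j) * wedgeL m (e m i) =
      if i = j then (-1 : ℝ) • 1 else 0 := by
  rw [e, e, wedgeL_ι_mul_dotL_ι_add_swap, polar_Qf_single]
  split_ifs <;> norm_num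

-- `xWedge`, `xDot` are definitionally `mulXOp`, and `dplus`, `dminus` are `pderivOp`, of the
-- families `eᵢ∧`, `eᵢ•`.
noncomputable def mulXOp (m : ℕ) (u : Fin m → Module.End ℝ (Cl m)) : Module.End ℝ (MS m) :=
  ∑ i, op m (LinearMap.mulLeft ℝ (X i)) (u i)

noncomputable def pderivOp (m : ℕ) (u : Fin m → Module.End ℝ (Cl m)) : Module.End ℝ (MS m) :=
  ∑ i, op m (pderiv i).toLinearMap (u i)

theorem mulXOp_mul_mulXOp_add_swap (u v : Fin m → Module.End ℝ (Cl m))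
    (h : ∀ i j, u i * v j + v j * u i = 0) :
    mulXOp m u * mulXOp m v + mulXOp m v * mulXOp m u = 0 := by
  rw [mulXOp, mulXOp, Finset.sum_mul_sum, Finset.sum_mul_sum, Finset.sum_comm (γ := Fin m),
    ← Finset.sum_add_distrib]
  refine Finset.sum_eq_zero fun i _ => ?_
  rw [← Finset.sum_add_distrib]
  refine Finset.sum_eq_zero fun j _ => ?_
  rw [op, op, TensorProduct.map_mul_map_add_map_mul_map, h,
    (LinearMap.commute_mulLeft_mulLeft (X j) (X i)).eq, sub_self, TensorProduct.map_zero_left,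
    TensorProduct.map_zero_right, add_zero]

theorem mulXOp_mul_self (u : Fin m → Module.End ℝ (Cl m))
    (h : ∀ i j, u i * u j + u j * u i = 0) : mulXOp m u * mulXOp m u = 0 :=
  eq_zero_of_add_self_eq_zero (V := Module.End ℝ (MS m)) (mulXOp_mul_mulXOp_add_swap u u h)

theorem sum_map_mulLeft_pderiv_X (i : Fin m) (w : Fin m → Module.End ℝ (Cl m)) :
    ∑ j, TensorProduct.map (LinearMap.mulLeft ℝ (pderiv j (X i : Pm m))) (w j) =
      TensorProduct.map LinearMap.id (w i) := by
  rw [Finset.sum_eq_single i (fun j _ hji => by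
    rw [pderiv_X_of_ne hji.symm, LinearMap.mulLeft_zero_eq_zero, TensorProduct.map_zero_left])
    (by simp), pderiv_X_self, LinearMap.mulLeft_one]

theorem pderivOp_mul_mulXOp_add_swap (u v : Fin m → Module.End ℝ (Cl m)) (c : ℝ)
    (h : ∀ i j, u i * v j + v j * u i = if i = j then c • 1 else 0) :
    pderivOp m u * mulXOp m v + mulXOp m v * pderivOp m u =
      c • Euler m + ∑ i, op m LinearMap.id (u i * v i) := by
  rw [pderivOp, mulXOp, Finset.sum_mul_sum, Finset.sum_mul_sum, Finset.sum_comm (γ := Fin m),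
    ← Finset.sum_add_distrib, Euler, Finset.smul_sum, ← Finset.sum_add_distrib]
  refine Finset.sum_congr rfl fun i _ => ?_
  rw [← Finset.sum_add_distrib]
  simp only [op, TensorProduct.map_mul_map_add_map_mul_map, h, Finset.sum_add_distrib,
    Derivation.toLinearMap_mul_mulLeft_sub, sum_map_mulLeft_pderiv_X]
  rw [Finset.sum_eq_single i (fun j _ hji => by rw [if_neg hji, TensorProduct.map_zero_right])
    (by simp), if_pos rfl, TensorProduct.map_smul_right]
  rfl

theorem commute_Mx2_mulXOp (u : Fin m → Module.End ℝ (Cl m)) : Commute (Mx2 m) (mulXOp m u) := by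
  refine Commute.sum_right _ _ _ fun i _ => (sub_eq_zero.mp ?_).symm
  rw [Mx2, op, op, TensorProduct.map_mul_map_id_sub_map_id_mul_map,
    (LinearMap.commute_mulLeft_mulLeft _ _).eq, sub_self, TensorProduct.map_zero_left]

theorem lie_pderivOp_Mx2 (u : Fin m → Module.End ℝ (Cl m)) :
    ⁅pderivOp m u, Mx2 m⁆ = (-2 : ℝ) • mulXOp m u := by
  rw [Ring.lie_def, pderivOp, mulXOp, Finset.sum_mul, Finset.mul_sum,
    ← Finset.sum_sub_distrib (G := Module.End ℝ (MS m)), Finset.smul_sum]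
  refine Finset.sum_congr rfl fun i _ => ?_
  rw [Mx2, op, op, op, TensorProduct.map_mul_map_id_sub_map_id_mul_map,
    Derivation.toLinearMap_mul_mulLeft_sub, pderiv_neg_sum_X_sq, ← TensorProduct.map_smul_left]
  congr 1
  ext p
  simp

theorem lie_pderivOp_Mx2_mul_mulXOp (u : Fin m → Module.End ℝ (Cl m))
    (h : ∀ i j, u i * u j + u j * u i = 0) : ⁅pderivOp m u, Mx2 m⁆ * mulXOp m u = 0 := by
  rw [lie_pderivOp_Mx2, smul_mul_assoc, mulXOp_mul_self u h, smul_zero]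

theorem xWedge_mul_self : xWedge m * xWedge m = 0 :=
  mulXOp_mul_self _ wedgeL_e_mul_wedgeL_e_add_swap

theorem xDot_mul_self : xDot m * xDot m = 0 :=
  mulXOp_mul_self _ dotL_e_mul_dotL_e_add_swap

theorem dplus_mul_xWedge_add_swap : dplus m * xWedge m + xWedge m * dplus m = 0 := by
  have hww i : wedgeL m (e m i) * wedgeL m (e m i) = 0 :=
    eq_zero_of_add_self_eq_zero (wedgeL_e_mul_wedgeL_e_add_swap i i)
  refine (pderivOp_mul_mulXOp_add_swap _ _ 0 fun i j => ?_).trans ?_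
  · simp [wedgeL_e_mul_wedgeL_e_add_swap]
  · simp [hww, op]

theorem dminus_mul_xDot_add_swap : dminus m * xDot m + xDot m * dminus m = 0 := by
  have hdd i : dotL m (e m i) * dotL m (e m i) = 0 :=
    eq_zero_of_add_self_eq_zero (dotL_e_mul_dotL_e_add_swap i i)
  refine (pderivOp_mul_mulXOp_add_swap _ _ 0 fun i j => ?_).trans ?_
  · simp [dotL_e_mul_dotL_e_add_swap]
  · simp [hdd, op]

theorem dplus_mul_xDot_add_swap :
    dplus m * xDot m + xDot m * dplus m = -(Euler m + fermPlus m) := by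
  refine (pderivOp_mul_mulXOp_add_swap _ _ (-1) wedgeL_e_mul_dotL_e_add_swap).trans ?_
  simp only [fermPlus, Module.End.mul_eq_comp]
  module

theorem dminus_mul_xWedge_add_swap :
    dminus m * xWedge m + xWedge m * dminus m = -(Euler m + fermMinus m) := by
  refine (pderivOp_mul_mulXOp_add_swap _ _ (-1) fun i j => ?_).trans ?_
  · rw [add_comm, wedgeL_e_mul_dotL_e_add_swap]
    simp only [eq_comm]
  · simp only [fermMinus, Module.End.mul_eq_comp]
    module

theorem Xmul_eq_xWedge_add_xDot : Xmul m = xWedge m + xDot m := by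
  rw [Xmul, xWedge, xDot, ← Finset.sum_add_distrib]
  simp only [op, ← TensorProduct.map_add_right, wedgeL_add_dotL]

end

theorem stmt11_general (m j : ℕ) (P : MS m) :
    (dplus m * (Mx2 m ^ j * Xmul m * xDot m) - Mx2 m ^ j * Xmul m * xDot m * dplus m) P =
      (Mx2 m ^ j * xWedge m * (Euler m + fermPlus m)) P ∧
    (dminus m * (Mx2 m ^ j * Xmul m * xWedge m) - Mx2 m ^ j * Xmul m * xWedge m * dminus m) P =
      (Mx2 m ^ j * xDot m * (Euler m + fermMinus m)) P := by
  have hWedge : ⁅dplus m, Mx2 m ^ j⁆ * xWedge m = 0 :=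
    lie_pow_mul_eq_zero (commute_Mx2_mulXOp _)
      (lie_pderivOp_Mx2_mul_mulXOp _ wedgeL_e_mul_wedgeL_e_add_swap) j
  have hDot : ⁅dminus m, Mx2 m ^ j⁆ * xDot m = 0 :=
    lie_pow_mul_eq_zero (commute_Mx2_mulXOp _)
      (lie_pderivOp_Mx2_mul_mulXOp _ dotL_e_mul_dotL_e_add_swap) j
  have hPlus := lie_mul_add_mul_eq xDot_mul_self dplus_mul_xWedge_add_swap
    dplus_mul_xDot_add_swap hWedge
  have hMinus := lie_mul_add_mul_eq xWedge_mul_self dminus_mul_xDot_add_swap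
    dminus_mul_xWedge_add_swap hDot
  rw [Ring.lie_def, ← Xmul_eq_xWedge_add_xDot] at hPlus
  rw [Ring.lie_def, add_comm, ← Xmul_eq_xWedge_add_xDot] at hMinus
  exact ⟨LinearMap.congr_fun hPlus P, LinearMap.congr_fun hMinus P⟩

/-- on k-homogeneous Cl^s-valued polynomials,
[∂⁺, x^{2j+1}(x•)] = x^{2j}(x∧)A and [∂⁻, x^{2j+1}(x∧)] = x^{2j}(x•)B. -/
theorem stmt11 (m j k s : ℕ) (P : MS m) (hP : P ∈ Pks m k s) :
    (dplus m * (Mx2 m ^ j * Xmul m * xDot m) - Mx2 m ^ j * Xmul m * xDot m * dplus m) P =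
      (Mx2 m ^ j * xWedge m * (Euler m + fermPlus m)) P ∧
    (dminus m * (Mx2 m ^ j * Xmul m * xWedge m) - Mx2 m ^ j * Xmul m * xWedge m * dminus m) P =
      (Mx2 m ^ j * xDot m * (Euler m + fermMinus m)) P :=
  stmt11_general m j P
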